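/- arXiv:2502.17586 — 4 statements merged into one kernel-verified Lean document; each statement's English description precedes it below -/
import Mathlib

section
/- The function F(x) = -0.5·G(x)² + 1.5·G(x)³, where G is a continuous cumulative distribution function, is not monotonically non-decreasing; in particular, F is not a cumulative distribution function. -/
open Filter Topology

lemma granzotto_cubic_neg {t : ℝ} (ht₀ : 0 < t) (ht : t < 1 / 3) :
    -0.5 * t ^ 2 + 1.5 * t ^ 3 < 0 := by
  have hfactor : -0.5 * t ^ 2 + 1.5 * t ^ 3 = t ^ 2 * (1.5 * t - 0.5) := by ring
  rw [hfactor]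
  exact mul_neg_of_pos_of_neg (by positivity) (by linarith)

theorem stmt_0_general (G : ℝ → ℝ)
    (hGbot : Filter.Tendsto G Filter.atBot (nhds 0))
    (hmid : ∃ x, 0 < G x ∧ G x < 1/3) :
    ¬ Monotone (fun x => -0.5 * (G x)^2 + 1.5 * (G x)^3) := by
  intro hF
  obtain ⟨x, hpos, hlt⟩ := hmid
  have hlim : Tendsto (fun x => -0.5 * (G x)^2 + 1.5 * (G x)^3) atBot (𝓝 0) := by
    have hcubic : Continuous (fun t : ℝ => -0.5 * t ^ 2 + 1.5 * t ^ 3) := by fun_prop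
    exact (hcubic.tendsto' 0 0 (by norm_num)).comp hGbot
  exact (granzotto_cubic_neg hpos hlt).not_ge (hF.le_of_tendsto hlim x)

/-- The Granzotto cubic transmutation with λ₁ = 0, λ₂ = -0.5, i.e.
F(x) = -0.5·G(x)² + 1.5·G(x)³, is not monotone (hence not a cdf) whenever G is a
continuous cdf attaining values strictly between 0 and 1/3. -/
theorem stmt_0 (G : ℝ → ℝ) (hGcont : Continuous G) (hGmono : Monotone G)
    (hGbot : Filter.Tendsto G Filter.atBot (nhds 0))
    (hGtop : Filter.Tendsto G Filter.atTop (nhds 1))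
    (hmid : ∃ x, 0 < G x ∧ G x < 1/3) :
    ¬ Monotone (fun x => -0.5 * (G x)^2 + 1.5 * (G x)^3) :=
  stmt_0_general G hGbot hmid
end

section
/- If 0 ≤ λ₁, 0 ≤ λ₂ and λ₁ + λ₂ ≤ 3, then the polynomial r(t) = λ₁ + 2(λ₂ - λ₁)t + 3(1 - λ₂)t² is nonnegative for all t ∈ [0,1]. -/
theorem stmt_1 (l1 l2 : ℝ) (h1 : 0 ≤ l1) (h2 : 0 ≤ l2) (h3 : l1 + l2 ≤ 3) :
    ∀ t ∈ Set.Icc (0:ℝ) 1, 0 ≤ l1 + 2*(l2 - l1)*t + 3*(1 - l2)*t^2 := by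
  rintro t ⟨ht0, ht1⟩
  nlinarith [mul_nonneg h1 (sq_nonneg (1 - t)), mul_nonneg (mul_nonneg h2 ht0) (sub_nonneg.mpr ht1), mul_nonneg (sub_nonneg.mpr h3) (sq_nonneg t)]
end

section
/- For every real λ with -1 ≤ λ ≤ 3, the polynomial r(t) = (1+λ) - 4λt + 3λt² is nonnegative for all t ∈ [0,1], and its integral over [0,1] equals 1; hence r is a probability density on [0,1]. -/
theorem stmt_3 (lam : ℝ) (h1 : -1 ≤ lam) (h2 : lam ≤ 3) :
    (∀ t ∈ Set.Icc (0:ℝ) 1, 0 ≤ (1 + lam) - 4*lam*t + 3*lam*t^2) ∧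
    ∫ t in (0:ℝ)..1, ((1 + lam) - 4*lam*t + 3*lam*t^2) = 1 := by
  constructor
  · rintro t ⟨ht0, ht1⟩
    nlinarith [sq_nonneg (3*t - 2), mul_nonneg ht0 (sub_nonneg.2 ht1),
      sq_nonneg (t - 1), sq_nonneg t]
  · have hA : ∫ x in (0:ℝ)..1, (4*lam)*x = (4*lam)*(1/2) := by
      rw [intervalIntegral.integral_const_mul, integral_id]; norm_num
    have hB : ∫ x in (0:ℝ)..1, (3*lam)*x^2 = (3*lam)*(1/3) := by
      rw [intervalIntegral.integral_const_mul, integral_pow]; norm_num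
    rw [intervalIntegral.integral_add, intervalIntegral.integral_sub]
    · rw [show (fun x : ℝ => 4*lam*x) = (fun x : ℝ => (4*lam)*x) by ring_nf,
        show (fun x : ℝ => 3*lam*x^2) = (fun x : ℝ => (3*lam)*x^2) by ring_nf,
        hA, hB]
      simp; ring
    · exact intervalIntegrable_const
    · exact ((by fun_prop : Continuous fun t : ℝ => 4*lam*t).intervalIntegrable 0 1)
    · exact ((by fun_prop : Continuous fun t : ℝ => (1+lam) - 4*lam*t).intervalIntegrable 0 1)
    · exact ((by fun_prop : Continuous fun t : ℝ => 3*lam*t^2).intervalIntegrable 0 1)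
end

section
/- For every real λ with -2 ≤ λ ≤ 1, the polynomial r(t) = (1-λ) + 6λt - 6λt² is nonnegative for all t ∈ [0,1], and its integral over [0,1] equals 1. -/
theorem stmt_4 (lam : ℝ) (h1 : -2 ≤ lam) (h2 : lam ≤ 1) :
    (∀ t ∈ Set.Icc (0:ℝ) 1, 0 ≤ (1 - lam) + 6*lam*t - 6*lam*t^2) ∧
    ∫ t in (0:ℝ)..1, ((1 - lam) + 6*lam*t - 6*lam*t^2) = 1 := by
  constructor
  · rintro t ⟨ht0, ht1⟩
    nlinarith [mul_nonneg ht0 (sub_nonneg.2 ht1), sq_nonneg (2*t - 1), sq_nonneg t]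
  · have i1 : IntervalIntegrable (fun t : ℝ => (1 - lam) + 6*lam*t) MeasureTheory.volume 0 1 :=
      (by continuity : Continuous fun t : ℝ => (1 - lam) + 6*lam*t).intervalIntegrable 0 1
    have i2 : IntervalIntegrable (fun t : ℝ => 6*lam*t^2) MeasureTheory.volume 0 1 :=
      (by continuity : Continuous fun t : ℝ => 6*lam*t^2).intervalIntegrable 0 1
    have i3 : IntervalIntegrable (fun _ : ℝ => (1 - lam)) MeasureTheory.volume 0 1 :=
      intervalIntegrable_const
    have i4 : IntervalIntegrable (fun t : ℝ => 6*lam*t) MeasureTheory.volume 0 1 :=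
      (by continuity : Continuous fun t : ℝ => 6*lam*t).intervalIntegrable 0 1
    rw [intervalIntegral.integral_sub i1 i2, intervalIntegral.integral_add i3 i4,
      intervalIntegral.integral_const, intervalIntegral.integral_const_mul,
      intervalIntegral.integral_const_mul, integral_id, integral_pow]
    simp only [smul_eq_mul]; ring
end
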